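/- arXiv:2202.04710 — 3 statements merged into one kernel-verified Lean document; each statement's English description precedes it below -/
import Mathlib

section
/- Let H be a finite-dimensional complex inner product space, let A and B be finite-dimensional complex inner product spaces, and let V : A ⊗[ℂ] B → H be a linear isometry (injective and inner-product preserving), with P = V ∘ V† the orthogonal projection onto the code subspace C = range V. Let (e_i)_{i∈I} be an orthonormal basis of C. Then for a linear operator E : H → H the following are equivalent: (1) there exists a linear map g : B → B such that P ∘ E ∘ P = V ∘ (id_A ⊗ g) ∘ V†; (2) for every linear map L : A → A and all indices i, j one has ⟪e_i, (L̄ ∘ E − E ∘ L̄) e_j⟫ = 0, where L̄ = V ∘ (L ⊗ id_B) ∘ V† is the logical operator on H induced by L. -/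
/-!
Write `M = V† E V`. Since `V† V = id`, condition (1) says exactly that `M = id ⊗ g`. Since the
`e i` span the code space `C = range V` and `Cᗮ = ker V†`, condition (2) says that
`V† (L̄ E - E L̄) V = (L ⊗ id) M - M (L ⊗ id)` vanishes for every `L`. So the theorem reduces to
describing the commutant of `{L ⊗ id}` in `End (A ⊗ B)`: it consists of the maps `id ⊗ g`. For this,
pick `a₀` and a functional `φ` with `φ a₀ = 1`; the rank-one maps `x ↦ φ x • a` send `a₀ ⊗ b` to
`a ⊗ b`, so `M (a ⊗ b) = a ⊗ g b` with `g b = (φ ⊗ id) (M (a₀ ⊗ b))`.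
-/

open TensorProduct

namespace LinearMap

section

variable {R A B : Type*} [CommSemiring R] [AddCommMonoid A] [Module R A]
  [AddCommMonoid B] [Module R B]

theorem rTensor_smulRight (φ : Module.Dual R A) (a : A) :
    (φ.smulRight a).rTensor B =
      TensorProduct.mk R A B a ∘ₗ (TensorProduct.lid R B).toLinearMap ∘ₗ φ.rTensor B :=
  TensorProduct.ext' fun x b => by simp [smul_tmul]

theorem eq_lTensor_of_forall_rTensor_comp_eq {a₀ : A} {φ : Module.Dual R A} (hφ : φ a₀ = 1)
    {M : A ⊗[R] B →ₗ[R] A ⊗[R] B} (hM : ∀ L : A →ₗ[R] A, L.rTensor B ∘ₗ M = M ∘ₗ L.rTensor B) :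
    M = lTensor A ((TensorProduct.lid R B).toLinearMap ∘ₗ φ.rTensor B ∘ₗ M ∘ₗ
      TensorProduct.mk R A B a₀) := by
  refine TensorProduct.ext' fun a b => ?_
  have ha : (φ.smulRight a).rTensor B (a₀ ⊗ₜ b) = a ⊗ₜ b := by simp [hφ]
  calc M (a ⊗ₜ b) = (φ.smulRight a).rTensor B (M (a₀ ⊗ₜ b)) := by
        rw [← ha, ← comp_apply, ← hM, comp_apply]
    _ = _ := by rw [rTensor_smulRight]; rfl

end

theorem exists_eq_lTensor_iff_forall_rTensor_comp_eq {K A B : Type*} [Field K]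
    [AddCommGroup A] [Module K A] [AddCommGroup B] [Module K B] (M : A ⊗[K] B →ₗ[K] A ⊗[K] B) :
    (∃ g : B →ₗ[K] B, M = g.lTensor A) ↔
      ∀ L : A →ₗ[K] A, L.rTensor B ∘ₗ M = M ∘ₗ L.rTensor B := by
  refine ⟨?_, fun hM => ?_⟩
  · rintro ⟨g, rfl⟩ L
    rw [rTensor_comp_lTensor, lTensor_comp_rTensor]
  obtain hA | hA := subsingleton_or_nontrivial A
  · exact ⟨0, Subsingleton.elim _ _⟩
  obtain ⟨a₀, ha₀⟩ := exists_ne (0 : A)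
  obtain ⟨φ, hφ⟩ := Module.Projective.exists_dual_eq_one K ha₀
  exact ⟨_, eq_lTensor_of_forall_rTensor_comp_eq hφ hM⟩

section

variable {R X E : Type*} [Semiring R] [AddCommMonoid X] [Module R X]
  [AddCommMonoid E] [Module R E] {V : X →ₗ[R] E} {W : E →ₗ[R] X}

theorem comp_comp_comp_eq_iff_of_comp_eq_id (hWV : W ∘ₗ V = id) (T : E →ₗ[R] E)
    (S : X →ₗ[R] X) : (V ∘ₗ W) ∘ₗ T ∘ₗ (V ∘ₗ W) = V ∘ₗ S ∘ₗ W ↔ W ∘ₗ T ∘ₗ V = S := by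
  have hWV' (x : X) : W (V x) = x := congr($hWV x)
  refine ⟨fun h => ext fun x => ?_, ?_⟩
  · simpa [hWV'] using congr(W ($h (V x)))
  · rintro rfl
    simp only [comp_assoc]

end

section

variable {R X E : Type*} [Ring R] [AddCommGroup X] [Module R X]
  [AddCommGroup E] [Module R E] {V : X →ₗ[R] E} {W : E →ₗ[R] X}

theorem comp_sub_comp_comp_of_comp_eq_id (hWV : W ∘ₗ V = id) (T : E →ₗ[R] E)
    (S : X →ₗ[R] X) :
    W ∘ₗ ((V ∘ₗ S ∘ₗ W) ∘ₗ T - T ∘ₗ (V ∘ₗ S ∘ₗ W)) ∘ₗ V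
      = S ∘ₗ (W ∘ₗ T ∘ₗ V) - (W ∘ₗ T ∘ₗ V) ∘ₗ S := by
  have hWV' (x : X) : W (V x) = x := congr($hWV x)
  ext x
  simp [hWV']

end

section

variable {𝕜 E X : Type*} [RCLike 𝕜] [NormedAddCommGroup E] [InnerProductSpace 𝕜 E]
  [AddCommGroup X] [Module 𝕜 X] {V : X →ₗ[𝕜] E} {W : E →ₗ[𝕜] X}

theorem orthogonal_range_eq_ker_of_comp_eq_id (hWV : W ∘ₗ V = id)
    (hP : (V ∘ₗ W).IsSymmetric) : (range V)ᗮ = ker W := by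
  have hW : range W = ⊤ :=
    range_eq_top.mpr (Function.LeftInverse.surjective (LinearMap.congr_fun hWV))
  have hV : ker V = ⊥ :=
    ker_eq_bot.mpr (Function.LeftInverse.injective (LinearMap.congr_fun hWV))
  rw [← range_comp_of_range_eq_top V hW, hP.orthogonal_range, ker_comp_of_ker_eq_bot W hV]

end

end LinearMap

theorem Submodule.span_range_isOrtho_map_iff {𝕜 E I : Type*} [RCLike 𝕜] [NormedAddCommGroup E]
    [InnerProductSpace 𝕜 E] (e : I → E) (T : E →ₗ[𝕜] E) :
    span 𝕜 (Set.range e) ⟂ (span 𝕜 (Set.range e)).map T ↔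
      ∀ i j, inner 𝕜 (e i) (T (e j)) = 0 := by
  rw [← span_image, ← Set.range_comp, isOrtho_span]
  simp

theorem subsystem_code_error_detection_iff_general
    {H A B : Type*}
    [NormedAddCommGroup H] [InnerProductSpace ℂ H]
    [NormedAddCommGroup A] [InnerProductSpace ℂ A]
    [NormedAddCommGroup B] [InnerProductSpace ℂ B]
    (V : A ⊗[ℂ] B →ₗ[ℂ] H)
    (Vd : H →ₗ[ℂ] A ⊗[ℂ] B)
    (hVdV : Vd ∘ₗ V = LinearMap.id)
    (hsa : (V ∘ₗ Vd).IsSymmetric)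
    {I : Type*} (e : I → H)
    (hspan : Submodule.span ℂ (Set.range e) = LinearMap.range V)
    (E : H →ₗ[ℂ] H) :
    (∃ g : B →ₗ[ℂ] B,
        (V ∘ₗ Vd) ∘ₗ E ∘ₗ (V ∘ₗ Vd)
          = V ∘ₗ TensorProduct.map LinearMap.id g ∘ₗ Vd)
      ↔ ∀ L : A →ₗ[ℂ] A, ∀ i j : I,
          (inner ℂ (e i)
            (((V ∘ₗ TensorProduct.map L LinearMap.id ∘ₗ Vd) ∘ₗ E
              - E ∘ₗ (V ∘ₗ TensorProduct.map L LinearMap.id ∘ₗ Vd)) (e j)) : ℂ)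
            = 0 := by
  simp only [← LinearMap.rTensor_def, ← LinearMap.lTensor_def,
    LinearMap.comp_comp_comp_eq_iff_of_comp_eq_id hVdV,
    LinearMap.exists_eq_lTensor_iff_forall_rTensor_comp_eq]
  refine forall_congr' fun L => ?_
  rw [← Submodule.span_range_isOrtho_map_iff, hspan, Submodule.isOrtho_comm,
    Submodule.isOrtho_iff_le, LinearMap.orthogonal_range_eq_ker_of_comp_eq_id hVdV hsa,
    ← LinearMap.range_comp, LinearMap.range_le_ker_iff,
    LinearMap.comp_sub_comp_comp_of_comp_eq_id hVdV, sub_eq_zero]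

/-- Error-detection condition for a subsystem code.  Let `V : A ⊗[ℂ] B → H` be a
linear isometry (inner-product preserving, as expressed on pure tensors by
sesquilinearity, and hence injective), and let `Vd = V†` be its adjoint, which —
`V` being an isometry — is characterized by `Vd ∘ V = id` together with the
self-adjointness of `P = V ∘ Vd` (so `P` is the orthogonal projection onto the
code subspace `C = range V`).  Let `(e i)` be an orthonormal basis of `C`.
Then for a linear operator `E : H → H` the following are equivalent:
(1) `P ∘ E ∘ P = V ∘ (id_A ⊗ g) ∘ V†` for some linear `g : B → B`;
(2) `⟪e i, (L̄ ∘ E − E ∘ L̄) (e j)⟫ = 0` for every linear `L : A → A` and all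
`i, j`, where `L̄ = V ∘ (L ⊗ id_B) ∘ V†`. -/
theorem subsystem_code_error_detection_iff
    {H A B : Type*}
    [NormedAddCommGroup H] [InnerProductSpace ℂ H] [FiniteDimensional ℂ H]
    [NormedAddCommGroup A] [InnerProductSpace ℂ A] [FiniteDimensional ℂ A]
    [NormedAddCommGroup B] [InnerProductSpace ℂ B] [FiniteDimensional ℂ B]
    (V : A ⊗[ℂ] B →ₗ[ℂ] H)
    (hV : ∀ (a₁ a₂ : A) (b₁ b₂ : B),
      (inner ℂ (V (a₁ ⊗ₜ[ℂ] b₁)) (V (a₂ ⊗ₜ[ℂ] b₂)) : ℂ)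
        = (inner ℂ a₁ a₂ : ℂ) * (inner ℂ b₁ b₂ : ℂ))
    (Vd : H →ₗ[ℂ] A ⊗[ℂ] B)
    (hVdV : Vd ∘ₗ V = LinearMap.id)
    (hsa : (V ∘ₗ Vd).IsSymmetric)
    {I : Type*} (e : I → H) (he : Orthonormal ℂ e)
    (hspan : Submodule.span ℂ (Set.range e) = LinearMap.range V)
    (E : H →ₗ[ℂ] H) :
    (∃ g : B →ₗ[ℂ] B,
        (V ∘ₗ Vd) ∘ₗ E ∘ₗ (V ∘ₗ Vd)
          = V ∘ₗ TensorProduct.map LinearMap.id g ∘ₗ Vd)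
      ↔ ∀ L : A →ₗ[ℂ] A, ∀ i j : I,
          (inner ℂ (e i)
            (((V ∘ₗ TensorProduct.map L LinearMap.id ∘ₗ Vd) ∘ₗ E
              - E ∘ₗ (V ∘ₗ TensorProduct.map L LinearMap.id ∘ₗ Vd)) (e j)) : ℂ)
            = 0 :=
  subsystem_code_error_detection_iff_general V Vd hVdV hsa e hspan E
end

section
/- Let H, A, B be finite-dimensional complex inner product spaces, V : A ⊗[ℂ] B → H a linear isometry, P = V ∘ V†, and E : H → H a linear operator. If there exists a linear map g : B → B with P ∘ E ∘ P = V ∘ (id_A ⊗ g) ∘ V†, then for every linear map L : A → A, writing L̄ = V ∘ (L ⊗ id_B) ∘ V†, one has P ∘ (L̄ ∘ E − E ∘ L̄) ∘ P = 0. -/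
open TensorProduct

/-!
Since `V† V = 1`, conjugation `X ↦ V X V†` is multiplicative and both `P = V V†` and every
`L̄` are fixed by multiplication with `P` on either side. Hence
`P (L̄ E − E L̄) P = L̄ (P E P) − (P E P) L̄`, the commutator of the conjugates of `L ⊗ 1` and
`1 ⊗ g`, which vanishes because those two act on different tensor factors.
-/

theorem mul_commutator_mul_eq_of_mul_eq_of_mul_eq {S : Type*} [Ring S] {p l e : S}
    (hpl : p * l = l) (hlp : l * p = l) :
    p * (l * e - e * l) * p = l * (p * e * p) - p * e * p * l := by
  calc p * (l * e - e * l) * p = (p * l) * e * p - p * e * (l * p) := by noncomm_ring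
    _ = (l * p) * e * p - p * e * (p * l) := by rw [hpl, hlp]
    _ = l * (p * e * p) - p * e * p * l := by noncomm_ring

namespace LinearMap

variable {R M N : Type*} [Semiring R] [AddCommMonoid M] [AddCommMonoid N]
  [Module R M] [Module R N] {V : M →ₗ[R] N} {Vd : N →ₗ[R] M}

theorem conj_mul_conj_of_comp_eq_id (h : Vd ∘ₗ V = id) (X Y : Module.End R M) :
    (V ∘ₗ X ∘ₗ Vd) * (V ∘ₗ Y ∘ₗ Vd) = V ∘ₗ (X * Y) ∘ₗ Vd := by
  simp only [Module.End.mul_eq_comp, comp_assoc]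
  rw [← comp_assoc _ V Vd, h, id_comp]

theorem proj_mul_conj_of_comp_eq_id (h : Vd ∘ₗ V = id) (X : Module.End R M) :
    (V ∘ₗ Vd) * (V ∘ₗ X ∘ₗ Vd) = V ∘ₗ X ∘ₗ Vd := by
  simp only [Module.End.mul_eq_comp, comp_assoc]
  rw [← comp_assoc _ V Vd, h, id_comp]

theorem conj_mul_proj_of_comp_eq_id (h : Vd ∘ₗ V = id) (X : Module.End R M) :
    (V ∘ₗ X ∘ₗ Vd) * (V ∘ₗ Vd) = V ∘ₗ X ∘ₗ Vd := by
  simp only [Module.End.mul_eq_comp, comp_assoc]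
  rw [← comp_assoc Vd V Vd, h, id_comp]

theorem commute_conj_of_comp_eq_id (h : Vd ∘ₗ V = id) {X Y : Module.End R M}
    (hXY : Commute X Y) : Commute (V ∘ₗ X ∘ₗ Vd) (V ∘ₗ Y ∘ₗ Vd) := by
  rw [Commute, SemiconjBy, conj_mul_conj_of_comp_eq_id h, conj_mul_conj_of_comp_eq_id h,
    hXY.eq]

end LinearMap

theorem TensorProduct.commute_map_id_map_id {R M N : Type*} [CommSemiring R]
    [AddCommMonoid M] [AddCommMonoid N] [Module R M] [Module R N]
    (f : Module.End R M) (g : Module.End R N) :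
    Commute (map f LinearMap.id : Module.End R (M ⊗[R] N)) (map LinearMap.id g) :=
  (LinearMap.rTensor_comp_lTensor _ f g).trans (LinearMap.lTensor_comp_rTensor _ f g).symm

theorem subsystem_code_gauge_action_implies_proj_commutator_zero_general
    {H A B : Type*}
    [NormedAddCommGroup H] [InnerProductSpace ℂ H]
    [NormedAddCommGroup A] [InnerProductSpace ℂ A]
    [NormedAddCommGroup B] [InnerProductSpace ℂ B]
    (V : A ⊗[ℂ] B →ₗ[ℂ] H)
    (Vd : H →ₗ[ℂ] A ⊗[ℂ] B)
    (hVdV : Vd ∘ₗ V = LinearMap.id)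
    (E : H →ₗ[ℂ] H)
    (hE : ∃ g : B →ₗ[ℂ] B,
      (V ∘ₗ Vd) ∘ₗ E ∘ₗ (V ∘ₗ Vd)
        = V ∘ₗ TensorProduct.map LinearMap.id g ∘ₗ Vd) :
    ∀ L : A →ₗ[ℂ] A,
      (V ∘ₗ Vd) ∘ₗ
          ((V ∘ₗ TensorProduct.map L LinearMap.id ∘ₗ Vd) ∘ₗ E
            - E ∘ₗ (V ∘ₗ TensorProduct.map L LinearMap.id ∘ₗ Vd)) ∘ₗ
          (V ∘ₗ Vd)
        = 0 := by
  intro L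
  obtain ⟨g, hg⟩ := hE
  set P : Module.End ℂ H := V ∘ₗ Vd
  set Lbar : Module.End ℂ H := V ∘ₗ map L LinearMap.id ∘ₗ Vd
  have hcomm : Commute Lbar (P * E * P) := by
    rw [show P * E * P = V ∘ₗ map LinearMap.id g ∘ₗ Vd from hg]
    exact LinearMap.commute_conj_of_comp_eq_id hVdV (TensorProduct.commute_map_id_map_id L g)
  calc P ∘ₗ (Lbar ∘ₗ E - E ∘ₗ Lbar) ∘ₗ P = P * (Lbar * E - E * Lbar) * P := rfl
    _ = Lbar * (P * E * P) - P * E * P * Lbar :=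
      mul_commutator_mul_eq_of_mul_eq_of_mul_eq
        (LinearMap.proj_mul_conj_of_comp_eq_id hVdV _)
        (LinearMap.conj_mul_proj_of_comp_eq_id hVdV _)
    _ = 0 := by rw [hcomm.eq, sub_self]

/-- If an error `E` acts on the code subspace of a subsystem code as
`P ∘ E ∘ P = V ∘ (id_A ⊗ g) ∘ V†` for some linear `g : B → B`, then for every
logical operator `L̄ = V ∘ (L ⊗ id_B) ∘ V†` the projected commutator vanishes:
`P ∘ (L̄ ∘ E − E ∘ L̄) ∘ P = 0`.  Here `V : A ⊗[ℂ] B → H` is a linear isometry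
(inner-product preserving on pure tensors, hence everywhere by
sesquilinearity), and `Vd = V†` is its adjoint, characterized by `Vd ∘ V = id`
and self-adjointness of `P = V ∘ Vd`. -/
theorem subsystem_code_gauge_action_implies_proj_commutator_zero
    {H A B : Type*}
    [NormedAddCommGroup H] [InnerProductSpace ℂ H] [FiniteDimensional ℂ H]
    [NormedAddCommGroup A] [InnerProductSpace ℂ A] [FiniteDimensional ℂ A]
    [NormedAddCommGroup B] [InnerProductSpace ℂ B] [FiniteDimensional ℂ B]
    (V : A ⊗[ℂ] B →ₗ[ℂ] H)
    (hV : ∀ (a₁ a₂ : A) (b₁ b₂ : B),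
      (inner ℂ (V (a₁ ⊗ₜ[ℂ] b₁)) (V (a₂ ⊗ₜ[ℂ] b₂)) : ℂ)
        = (inner ℂ a₁ a₂ : ℂ) * (inner ℂ b₁ b₂ : ℂ))
    (Vd : H →ₗ[ℂ] A ⊗[ℂ] B)
    (hVdV : Vd ∘ₗ V = LinearMap.id)
    (hsa : (V ∘ₗ Vd).IsSymmetric)
    (E : H →ₗ[ℂ] H)
    (hE : ∃ g : B →ₗ[ℂ] B,
      (V ∘ₗ Vd) ∘ₗ E ∘ₗ (V ∘ₗ Vd)
        = V ∘ₗ TensorProduct.map LinearMap.id g ∘ₗ Vd) :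
    ∀ L : A →ₗ[ℂ] A,
      (V ∘ₗ Vd) ∘ₗ
          ((V ∘ₗ TensorProduct.map L LinearMap.id ∘ₗ Vd) ∘ₗ E
            - E ∘ₗ (V ∘ₗ TensorProduct.map L LinearMap.id ∘ₗ Vd)) ∘ₗ
          (V ∘ₗ Vd)
        = 0 :=
  subsystem_code_gauge_action_implies_proj_commutator_zero_general V Vd hVdV E hE
end

section
/- Let H, A, B be finite-dimensional complex inner product spaces, V : A ⊗[ℂ] B → H a linear isometry, P = V ∘ V† the orthogonal projection onto C = range V, (e_i)_{i∈I} an orthonormal basis of C, and (b_k)_{k∈K} a finite family of linear maps A → A that spans End(A) as a ℂ-vector space. For a linear operator E : H → H define the error functional 𝓔_E = Σ_{i,j∈I} Σ_{k∈K} |⟪e_i, (b̄_k ∘ E − E ∘ b̄_k) e_j⟫|², where b̄_k = V ∘ (b_k ⊗ id_B) ∘ V†. Then 𝓔_E = 0 if and only if there exists a linear map g : B → B such that P ∘ E ∘ P = V ∘ (id_A ⊗ g) ∘ V†. -/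
/-!
Write `F = V† E V`. Because `V† V = 1`, the compression `P X P` of `X = [b̄ₖ, E]` equals
`V [bₖ ⊗ 1, F] V†`, and because `P` is a symmetric projection onto `span e`, all matrix entries
`⟪e i, X (e j)⟫` vanish iff `P X P = 0`. Hence `𝓔_E = 0` iff `F` commutes with every `bₖ ⊗ 1`,
i.e. (the `bₖ` spanning `End A`) with all of `End A ⊗ 1`, whose commutant is `1 ⊗ End B`.
-/

open TensorProduct

open Submodule in
theorem LinearMap.IsSymmetricProjection.comp_comp_eq_zero_iff {𝕜 E ι : Type*} [RCLike 𝕜]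
    [NormedAddCommGroup E] [InnerProductSpace 𝕜 E] {P : E →ₗ[𝕜] E}
    (hP : P.IsSymmetricProjection) {e : ι → E} (he : span 𝕜 (Set.range e) = range P)
    (T : E →ₗ[𝕜] E) :
    P ∘ₗ T ∘ₗ P = 0 ↔ ∀ i j, inner 𝕜 (e i) (T (e j)) = 0 := by
  have hPe (i : ι) : P (e i) = e i :=
    (IsIdempotentElem.mem_range_iff hP.isIdempotentElem).1 (he ▸ subset_span ⟨i, rfl⟩)
  have inner_comp_comp (x y : E) : inner 𝕜 x ((P ∘ₗ T ∘ₗ P) y) = inner 𝕜 (P x) (T (P y)) :=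
    (hP.isSymmetric x _).symm
  refine ⟨fun h i j => by simpa [h, hPe] using (inner_comp_comp (e i) (e j)).symm, fun h => ?_⟩
  have h_span : ∀ u ∈ span 𝕜 (Set.range e), ∀ v ∈ span 𝕜 (Set.range e), inner 𝕜 u (T v) = 0 := by
    intro u hu v hv
    induction hu, hv using span_induction₂ with
    | mem_mem u v hu hv => obtain ⟨⟨i, rfl⟩, ⟨j, rfl⟩⟩ := And.intro hu hv; exact h i j
    | zero_left | zero_right => simp
    | add_left | add_right => simp_all [inner_add_left, inner_add_right]
    | smul_left | smul_right => simp_all [inner_smul_left, inner_smul_right]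
  ext y
  refine ext_inner_left 𝕜 fun x => ?_
  rw [inner_comp_comp, zero_apply, inner_zero_right]
  exact h_span _ (he ▸ mem_range_self P x) _ (he ▸ mem_range_self P y)

namespace LinearMap

section Compression

variable {R M N : Type*} [Semiring R] [AddCommGroup M] [Module R M] [AddCommGroup N] [Module R N]
  {V : M →ₗ[R] N} {Vd : N →ₗ[R] M}

theorem comp_comp_injective_of_comp_eq_id (h : Vd ∘ₗ V = id) :
    Function.Injective fun X : M →ₗ[R] M => V ∘ₗ X ∘ₗ Vd := fun X Y hXY => by
  ext x
  have h' (y : M) : Vd (V y) = y := congr($h y)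
  simpa [h'] using congr(Vd ($hXY (V x)))

theorem comp_commutator_comp_of_comp_eq_id (h : Vd ∘ₗ V = id) (L : M →ₗ[R] M) (E : N →ₗ[R] N) :
    Vd ∘ₗ ((V ∘ₗ L ∘ₗ Vd) ∘ₗ E - E ∘ₗ (V ∘ₗ L ∘ₗ Vd)) ∘ₗ V
      = L ∘ₗ (Vd ∘ₗ E ∘ₗ V) - (Vd ∘ₗ E ∘ₗ V) ∘ₗ L := by
  ext x
  have h' (y : M) : Vd (V y) = y := congr($h y)
  simp [h']

end Compression

section Commutant

variable {R A B : Type*} [CommSemiring R] [AddCommMonoid A] [Module R A] [AddCommMonoid B]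
  [Module R B]

theorem rTensor_smulRight_apply (φ : Module.Dual R A) (a : A) (y : A ⊗[R] B) :
    (φ.smulRight a).rTensor B y = a ⊗ₜ TensorProduct.lid R B (φ.rTensor B y) := by
  induction y using TensorProduct.induction_on with
  | zero => simp
  | tmul x c => simp [smul_tmul']
  | add y z hy hz => simp [hy, hz, tmul_add]

theorem commute_rTensor_lTensor (L : A →ₗ[R] A) (g : B →ₗ[R] B) :
    Commute (L.rTensor B) (g.lTensor A) := by
  rw [commute_iff_eq, Module.End.mul_eq_comp, Module.End.mul_eq_comp, rTensor_comp_lTensor,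
    lTensor_comp_rTensor]

theorem forall_commute_rTensor_iff_of_span_eq_top {ι : Type*} {b : ι → A →ₗ[R] A}
    (hb : Submodule.span R (Set.range b) = ⊤) (F : Module.End R (A ⊗[R] B)) :
    (∀ L : A →ₗ[R] A, Commute (L.rTensor B) F) ↔ ∀ i, Commute ((b i).rTensor B) F := by
  refine ⟨fun h i => h (b i), fun h L => ?_⟩
  have h_le : Submodule.span R (Set.range b)
      ≤ (Subalgebra.centralizer R {F}).toSubmodule.comap (rTensorHom B) :=
    Submodule.span_le.2 <| Set.range_subset_iff.2 fun i => by
      simpa [Subalgebra.mem_centralizer_iff, Set.mem_centralizer_iff] using (h i).symm.eq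
  simpa [Subalgebra.mem_centralizer_iff, Set.mem_centralizer_iff, commute_iff_eq, eq_comm] using
    h_le (hb ▸ Submodule.mem_top : L ∈ Submodule.span R (Set.range b))

end Commutant

section FieldCommutant

variable {K A B : Type*} [Field K] [AddCommGroup A] [Module K A] [AddCommGroup B] [Module K B]

theorem exists_eq_lTensor_of_forall_commute_rTensor (F : Module.End K (A ⊗[K] B))
    (hF : ∀ L : A →ₗ[K] A, Commute (L.rTensor B) F) : ∃ g : B →ₗ[K] B, F = g.lTensor A := by
  rcases subsingleton_or_nontrivial A with hA | hA
  · exact ⟨0, Subsingleton.elim _ _⟩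
  obtain ⟨a₀, ha₀⟩ := exists_ne (0 : A)
  obtain ⟨φ, hφ⟩ := Module.Projective.exists_dual_eq_one K ha₀
  -- `F (a ⊗ c)` is obtained from `F (a₀ ⊗ c)` by the rank-one map `x ↦ φ x • a`.
  refine ⟨TensorProduct.lid K B ∘ₗ φ.rTensor B ∘ₗ F ∘ₗ TensorProduct.mk K A B a₀, ?_⟩
  ext a c
  have h_move : (φ.smulRight a).rTensor B (a₀ ⊗ₜ c) = a ⊗ₜ c := by simp [hφ]
  calc F (a ⊗ₜ c) = (φ.smulRight a).rTensor B (F (a₀ ⊗ₜ c)) := by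
        rw [← h_move, ← Module.End.mul_apply, ← (hF _).eq, Module.End.mul_apply]
    _ = _ := rTensor_smulRight_apply φ a _

theorem forall_commute_rTensor_iff_exists_eq_lTensor (F : Module.End K (A ⊗[K] B)) :
    (∀ L : A →ₗ[K] A, Commute (L.rTensor B) F) ↔ ∃ g : B →ₗ[K] B, F = g.lTensor A :=
  ⟨exists_eq_lTensor_of_forall_commute_rTensor F,
    fun ⟨g, hg⟩ L => hg ▸ commute_rTensor_lTensor L g⟩

end FieldCommutant

end LinearMap

theorem subsystem_code_error_functional_eq_zero_iff_general
    {H A B : Type*}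
    [NormedAddCommGroup H] [InnerProductSpace ℂ H]
    [NormedAddCommGroup A] [InnerProductSpace ℂ A]
    [NormedAddCommGroup B] [InnerProductSpace ℂ B]
    (V : A ⊗[ℂ] B →ₗ[ℂ] H)
    (Vd : H →ₗ[ℂ] A ⊗[ℂ] B)
    (hVdV : Vd ∘ₗ V = LinearMap.id)
    (hsa : (V ∘ₗ Vd).IsSymmetric)
    {I : Type*} [Fintype I] (e : I → H)
    (hspan : Submodule.span ℂ (Set.range e) = LinearMap.range V)
    {K : Type*} [Fintype K] (b : K → (A →ₗ[ℂ] A))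
    (hb : Submodule.span ℂ (Set.range b) = (⊤ : Submodule ℂ (A →ₗ[ℂ] A)))
    (E : H →ₗ[ℂ] H) :
    (∑ i : I, ∑ j : I, ∑ k : K,
        ‖(inner ℂ (e i)
            (((V ∘ₗ TensorProduct.map (b k) LinearMap.id ∘ₗ Vd) ∘ₗ E
              - E ∘ₗ (V ∘ₗ TensorProduct.map (b k) LinearMap.id ∘ₗ Vd))
              (e j)) : ℂ)‖ ^ 2) = 0
      ↔ ∃ g : B →ₗ[ℂ] B,
          (V ∘ₗ Vd) ∘ₗ E ∘ₗ (V ∘ₗ Vd)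
            = V ∘ₗ TensorProduct.map LinearMap.id g ∘ₗ Vd := by
  have hP : (V ∘ₗ Vd).IsSymmetricProjection :=
    ⟨by rw [IsIdempotentElem, Module.End.mul_eq_comp, LinearMap.comp_assoc,
      ← LinearMap.comp_assoc Vd, hVdV, LinearMap.id_comp], hsa⟩
  have h_range : LinearMap.range (V ∘ₗ Vd) = LinearMap.range V :=
    LinearMap.range_comp_of_range_eq_top V <| LinearMap.range_eq_top_of_surjective _ <|
      Function.LeftInverse.surjective fun x => congr($hVdV x)
  have h_conj := LinearMap.comp_comp_injective_of_comp_eq_id hVdV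
  calc _ ↔ ∀ i j k, inner ℂ (e i) (((V ∘ₗ (b k).rTensor B ∘ₗ Vd) ∘ₗ E
              - E ∘ₗ (V ∘ₗ (b k).rTensor B ∘ₗ Vd)) (e j)) = 0 := by
        simp (disch := intros; positivity) only [Finset.sum_eq_zero_iff_of_nonneg,
          Finset.mem_univ, forall_const, pow_eq_zero_iff, norm_eq_zero, ← LinearMap.rTensor_def]
    _ ↔ ∀ k, (V ∘ₗ Vd) ∘ₗ ((V ∘ₗ (b k).rTensor B ∘ₗ Vd) ∘ₗ E
              - E ∘ₗ (V ∘ₗ (b k).rTensor B ∘ₗ Vd)) ∘ₗ (V ∘ₗ Vd) = 0 := by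
        simp only [hP.comp_comp_eq_zero_iff (hspan.trans h_range.symm)]
        exact ⟨fun h k i j => h i j k, fun h i j k => h k i j⟩
    _ ↔ ∀ k, Commute ((b k).rTensor B) (Vd ∘ₗ E ∘ₗ V) := forall_congr' fun k => by
        change V ∘ₗ (Vd ∘ₗ _ ∘ₗ V) ∘ₗ Vd = 0 ↔ _
        rw [LinearMap.comp_commutator_comp_of_comp_eq_id hVdV, commute_iff_eq,
          Module.End.mul_eq_comp, Module.End.mul_eq_comp]
        exact (h_conj.eq_iff' (show V ∘ₗ 0 ∘ₗ Vd = 0 by simp)).trans sub_eq_zero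
    _ ↔ ∃ g : B →ₗ[ℂ] B, Vd ∘ₗ E ∘ₗ V = g.lTensor A := by
        rw [← LinearMap.forall_commute_rTensor_iff_of_span_eq_top hb,
          LinearMap.forall_commute_rTensor_iff_exists_eq_lTensor]
    _ ↔ _ := exists_congr fun g => h_conj.eq_iff.symm

/-- Vanishing of the error functional characterizes harmless errors of a
subsystem code.  Let `V : A ⊗[ℂ] B → H` be a linear isometry (inner-product
preserving on pure tensors, hence everywhere by sesquilinearity), with adjoint
`Vd = V†` characterized by `Vd ∘ V = id` and self-adjointness of
`P = V ∘ Vd` (the orthogonal projection onto the code subspace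
`C = range V`).  Let `(e i)` be an orthonormal basis of `C`, and `(b k)` a
finite family of linear maps `A → A` spanning `End(A)`.  For a linear operator
`E : H → H` the error functional
`𝓔_E = Σ_{i,j,k} |⟪e i, (b̄ₖ ∘ E − E ∘ b̄ₖ) (e j)⟫|²`, where
`b̄ₖ = V ∘ (b k ⊗ id_B) ∘ V†`, vanishes iff
`P ∘ E ∘ P = V ∘ (id_A ⊗ g) ∘ V†` for some linear `g : B → B`. -/
theorem subsystem_code_error_functional_eq_zero_iff
    {H A B : Type*}
    [NormedAddCommGroup H] [InnerProductSpace ℂ H] [FiniteDimensional ℂ H]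
    [NormedAddCommGroup A] [InnerProductSpace ℂ A] [FiniteDimensional ℂ A]
    [NormedAddCommGroup B] [InnerProductSpace ℂ B] [FiniteDimensional ℂ B]
    (V : A ⊗[ℂ] B →ₗ[ℂ] H)
    (hV : ∀ (a₁ a₂ : A) (b₁ b₂ : B),
      (inner ℂ (V (a₁ ⊗ₜ[ℂ] b₁)) (V (a₂ ⊗ₜ[ℂ] b₂)) : ℂ)
        = (inner ℂ a₁ a₂ : ℂ) * (inner ℂ b₁ b₂ : ℂ))
    (Vd : H →ₗ[ℂ] A ⊗[ℂ] B)
    (hVdV : Vd ∘ₗ V = LinearMap.id)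
    (hsa : (V ∘ₗ Vd).IsSymmetric)
    {I : Type*} [Fintype I] (e : I → H) (he : Orthonormal ℂ e)
    (hspan : Submodule.span ℂ (Set.range e) = LinearMap.range V)
    {K : Type*} [Fintype K] (b : K → (A →ₗ[ℂ] A))
    (hb : Submodule.span ℂ (Set.range b) = (⊤ : Submodule ℂ (A →ₗ[ℂ] A)))
    (E : H →ₗ[ℂ] H) :
    (∑ i : I, ∑ j : I, ∑ k : K,
        ‖(inner ℂ (e i)
            (((V ∘ₗ TensorProduct.map (b k) LinearMap.id ∘ₗ Vd) ∘ₗ E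
              - E ∘ₗ (V ∘ₗ TensorProduct.map (b k) LinearMap.id ∘ₗ Vd))
              (e j)) : ℂ)‖ ^ 2) = 0
      ↔ ∃ g : B →ₗ[ℂ] B,
          (V ∘ₗ Vd) ∘ₗ E ∘ₗ (V ∘ₗ Vd)
            = V ∘ₗ TensorProduct.map LinearMap.id g ∘ₗ Vd :=
  subsystem_code_error_functional_eq_zero_iff_general V Vd hVdV hsa e hspan b hb E
end
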